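/- Let n ≥ 1, let R : ℝ → Matrix (Fin n) (Fin n) ℝ be continuous with R(t) symmetric for every t, and let α ≥ 1. Let U and S be Lagrangian Jacobi solutions along R with U(0) = S(0) = 1 such that, for every u ≥ 0 and every x ∈ ℝⁿ, U(u) and S(u) are invertible, ‖S(u) x‖ ≤ α ‖x‖ and ‖U(u) x‖ ≥ ‖x‖ / α. Let t > 0 and let S_t be the Jacobi solution along R with S_t(0) = 1 and S_t(t) = 0. Then for every x ∈ ℝⁿ with (U'(0) − S'(0)) x = 0, one has (1 / (α² t)) ⟨x, x⟩ ≤ ⟨(U'(0) − S_t'(0)) x, x⟩ ≤ (α² / t) ⟨x, x⟩. -/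

import Mathlib

/-
Along a Lagrangian solution `Y` that is invertible on `[0, t]`, the Wronskian
`W(Y, Z) = Yᵀ Z' - Y'ᵀ Z` of any Jacobi solution `Z` is constant, and
`(Y⁻¹ Z)' = (Yᵀ Y)⁻¹ W(Y, Z)`. For `Z = S_t` this integrates to
`(∫₀ᵗ (Yᵀ Y)⁻¹) (Y'(0) - S_t'(0)) = 1`. Apply this to `Y = U` and `Y = S`: for `x` in the kernel
of `U'(0) - S'(0)`, the vector `y = (U'(0) - S_t'(0)) x` is mapped to `x` by both
`B_U = ∫₀ᵗ (Uᵀ U)⁻¹` and `B_S = ∫₀ᵗ (Sᵀ S)⁻¹`. The norm bounds on `U` and `S` give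
`0 ≤ B_U ≤ α² t` and `B_S ≥ t / α²` as quadratic forms, and the Cauchy–Schwarz inequality for
these forms turns `B_U y = B_S y = x` into the two bounds on `⟨y, x⟩`.
-/

open Matrix MeasureTheory

attribute [local instance] Matrix.normedAddCommGroup Matrix.normedSpace

/-- A Jacobi solution along `R`: a twice continuously differentiable matrix-valued
map `Y` satisfying `Y'' + R Y = 0`. -/
def IsJacobi {n : ℕ} (R Y : ℝ → Matrix (Fin n) (Fin n) ℝ) : Prop :=
  ContDiff ℝ 2 Y ∧ ∀ t : ℝ, deriv (deriv Y) t + R t * Y t = 0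

/-- A Lagrangian (self-conjugate) solution: the Wronskian `W(Y,Y)` vanishes. -/
def IsLagrangian {n : ℕ} (Y : ℝ → Matrix (Fin n) (Fin n) ℝ) : Prop :=
  ∀ t : ℝ, (deriv Y t)ᵀ * Y t = (Y t)ᵀ * deriv Y t

/-- The Euclidean norm on `ℝⁿ`. -/
noncomputable def euclNorm {n : ℕ} (x : Fin n → ℝ) : ℝ :=
  Real.sqrt (x ⬝ᵥ x)

open Filter Topology

section MatrixCalculus

variable {m n p : Type*} [Fintype m] [Fintype n] [Fintype p]

theorem ContinuousAt.matrix_inv {X : Type*} [TopologicalSpace X] [DecidableEq n]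
    {f : X → Matrix n n ℝ} {x : X} (hf : ContinuousAt f x) (hdet : (f x).det ≠ 0) :
    ContinuousAt (fun s => (f s)⁻¹) x :=
  (continuousAt_matrix_inv _ (by simpa using continuousAt_inv₀ hdet)).comp hf

theorem HasDerivAt.matrix_mul {f : ℝ → Matrix m n ℝ} {g : ℝ → Matrix n p ℝ}
    {f' : Matrix m n ℝ} {g' : Matrix n p ℝ} {u : ℝ}
    (hf : HasDerivAt f f' u) (hg : HasDerivAt g g' u) :
    HasDerivAt (fun s => f s * g s) (f' * g u + f u * g') u := by
  let B : Matrix m n ℝ →L[ℝ] Matrix n p ℝ →L[ℝ] Matrix m p ℝ :=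
    (LinearMap.toContinuousLinearMap.toLinearMap ∘ₗ mulLinearMap ℝ).toContinuousLinearMap
  have h := B.hasDerivAt_of_bilinear (fun _ => hf) (fun _ => hg)
  rw [add_comm] at h
  exact h

theorem HasDerivAt.matrix_transpose {f : ℝ → Matrix m n ℝ} {f' : Matrix m n ℝ} {u : ℝ}
    (hf : HasDerivAt f f' u) : HasDerivAt (fun s => (f s)ᵀ) f'ᵀ u :=
  hasDerivAt_pi.2 fun i => hasDerivAt_pi.2 fun j => hasDerivAt_pi.1 (hasDerivAt_pi.1 hf j) i

theorem HasDerivAt.matrix_inv [DecidableEq n] {f : ℝ → Matrix n n ℝ} {f' : Matrix n n ℝ} {u : ℝ}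
    (hf : HasDerivAt f f' u) (hdet : (f u).det ≠ 0) :
    HasDerivAt (fun s => (f s)⁻¹) (-((f u)⁻¹ * f' * (f u)⁻¹)) u := by
  have hdet_near : ∀ᶠ s in 𝓝 u, (f s).det ≠ 0 :=
    (continuous_id.matrix_det.continuousAt.comp hf.continuousAt).eventually_ne hdet
  have hlim : Tendsto (fun s => -((f s)⁻¹ * slope f u s * (f u)⁻¹)) (𝓝[≠] u)
      (𝓝 (-((f u)⁻¹ * f' * (f u)⁻¹))) :=
    ((((hf.continuousAt.matrix_inv hdet).tendsto.mono_left nhdsWithin_le_nhds).mul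
      (hasDerivAt_iff_tendsto_slope.1 hf)).mul_const _).neg
  refine hasDerivAt_iff_tendsto_slope.2 (hlim.congr' ?_)
  filter_upwards [nhdsWithin_le_nhds hdet_near] with s hs
  -- `(f s)⁻¹ - (f u)⁻¹ = -(f s)⁻¹ * (f s - f u) * (f u)⁻¹`
  rw [slope_def_module, slope_def_module, Matrix.mul_smul, Matrix.smul_mul, ← smul_neg, mul_sub,
    sub_mul, nonsing_inv_mul _ hs.isUnit, one_mul, mul_nonsing_inv_cancel_right _ _ hdet.isUnit,
    neg_sub]

theorem continuousOn_inv_transpose_mul_self [DecidableEq n] {Y : ℝ → Matrix n n ℝ}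
    (hY : Continuous Y) {s : Set ℝ} (hunit : ∀ u ∈ s, IsUnit (Y u)) :
    ContinuousOn (fun u => ((Y u)ᵀ * Y u)⁻¹) s := fun u hu => by
  have hdet := ((isUnit_iff_isUnit_det _).1 (hunit u hu)).ne_zero
  refine ((hY.matrix_transpose.matrix_mul hY).continuousAt.matrix_inv ?_).continuousWithinAt
  rw [det_mul, det_transpose]
  exact mul_ne_zero hdet hdet

end MatrixCalculus

namespace Matrix

variable {n : Type*} [Fintype n]

theorem dotProduct_self_nonneg (v : n → ℝ) : 0 ≤ v ⬝ᵥ v := by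
  simpa using dotProduct_star_self_nonneg v

theorem dotProduct_sq_le (x y : n → ℝ) : (x ⬝ᵥ y) ^ 2 ≤ (x ⬝ᵥ x) * (y ⬝ᵥ y) := by
  have h := real_inner_mul_inner_self_le (WithLp.toLp 2 x) (WithLp.toLp 2 y)
  simp only [EuclideanSpace.inner_toLp_toLp, star_trivial] at h
  rwa [sq, dotProduct_comm x y]

theorem PosSemidef.dotProduct_mulVec_sq_le {M : Matrix n n ℝ} (hM : M.PosSemidef) (x y : n → ℝ) :
    (x ⬝ᵥ (M *ᵥ y)) ^ 2 ≤ (x ⬝ᵥ (M *ᵥ x)) * (y ⬝ᵥ (M *ᵥ y)) := by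
  let _ := M.toSeminormedAddCommGroup hM
  let _ := M.toInnerProductSpace hM
  have hinner (a b : n → ℝ) : inner ℝ a b = a ⬝ᵥ (M *ᵥ b) := by
    rw [dotProduct_comm]; rfl
  rw [sq, ← hinner, ← hinner, ← hinner]
  exact real_inner_mul_inner_self_le x y

theorem PosSemidef.mulVec_dotProduct_mulVec_le {B : Matrix n n ℝ} (hB : B.PosSemidef) {c : ℝ}
    (hle : ∀ z, z ⬝ᵥ (B *ᵥ z) ≤ c * (z ⬝ᵥ z)) (y : n → ℝ) :
    (B *ᵥ y) ⬝ᵥ (B *ᵥ y) ≤ c * (y ⬝ᵥ (B *ᵥ y)) := by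
  -- with `x = B y`: `⟨x, x⟩² = ⟨x, B y⟩² ≤ ⟨x, B x⟩ ⟨y, B y⟩ ≤ c ⟨x, x⟩ ⟨y, B y⟩`
  set x := B *ᵥ y
  have hcs := hB.dotProduct_mulVec_sq_le x y
  have hx := hle x
  have hy : y ⬝ᵥ x ≤ c * (y ⬝ᵥ y) := hle y
  have hpy : 0 ≤ y ⬝ᵥ x := by simpa using hB.dotProduct_mulVec_nonneg y
  have hpx : 0 ≤ x ⬝ᵥ (B *ᵥ x) := by simpa using hB.dotProduct_mulVec_nonneg x
  have hyy := dotProduct_self_nonneg y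
  rcases (dotProduct_self_nonneg x).eq_or_lt with hxx | hxx
  · rw [← hxx]
    rcases le_or_gt 0 c with hc | hc
    · exact mul_nonneg hc hpy
    · have hq : y ⬝ᵥ x = 0 := by nlinarith
      rw [hq, mul_zero]
  · nlinarith

theorem dotProduct_mulVec_le_of_forall_le {B : Matrix n n ℝ} {c d : ℝ} (hc : 0 ≤ c) (hd : 0 ≤ d)
    (hge : ∀ z, d * (z ⬝ᵥ z) ≤ c * (z ⬝ᵥ (B *ᵥ z))) (y : n → ℝ) :
    d * (y ⬝ᵥ (B *ᵥ y)) ≤ c * ((B *ᵥ y) ⬝ᵥ (B *ᵥ y)) := by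
  -- `d ⟨y, B y⟩² ≤ d ⟨y, y⟩ ⟨B y, B y⟩ ≤ c ⟨y, B y⟩ ⟨B y, B y⟩`
  have hcs := dotProduct_sq_le y (B *ᵥ y)
  have hy := hge y
  have hxx := dotProduct_self_nonneg (B *ᵥ y)
  rcases le_or_gt (y ⬝ᵥ (B *ᵥ y)) 0 with hq | hq
  · nlinarith
  · nlinarith [dotProduct_self_nonneg y]

theorem posSemidef_transpose_mul_self (A : Matrix n n ℝ) : (Aᵀ * A).PosSemidef := by
  simpa [conjTranspose_eq_transpose_of_trivial] using posSemidef_conjTranspose_mul_self A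

theorem dotProduct_transpose_mul_self_mulVec (A : Matrix n n ℝ) (z : n → ℝ) :
    z ⬝ᵥ ((Aᵀ * A) *ᵥ z) = (A *ᵥ z) ⬝ᵥ (A *ᵥ z) := by
  rw [← mulVec_mulVec, dotProduct_mulVec, vecMul_transpose]

section Inverse

variable [DecidableEq n]

theorem transpose_mul_self_mulVec_inv_mulVec {A : Matrix n n ℝ} (hA : IsUnit A) (z : n → ℝ) :
    (Aᵀ * A) *ᵥ ((Aᵀ * A)⁻¹ *ᵥ z) = z := by
  have hdet : IsUnit (Aᵀ * A).det :=
    (isUnit_iff_isUnit_det _).1 (((isUnit_transpose A).2 hA).mul hA)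
  rw [mulVec_mulVec, mul_nonsing_inv _ hdet, one_mulVec]

theorem dotProduct_inv_transpose_mul_self_le {A : Matrix n n ℝ} (hA : IsUnit A) {c : ℝ}
    (hc : 0 ≤ c) (h : ∀ x, x ⬝ᵥ x ≤ c * ((A *ᵥ x) ⬝ᵥ (A *ᵥ x))) (z : n → ℝ) :
    z ⬝ᵥ ((Aᵀ * A)⁻¹ *ᵥ z) ≤ c * (z ⬝ᵥ z) := by
  have key := dotProduct_mulVec_le_of_forall_le hc zero_le_one (B := Aᵀ * A)
    (fun x => by rw [one_mul, dotProduct_transpose_mul_self_mulVec]; exact h x) ((Aᵀ * A)⁻¹ *ᵥ z)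
  rwa [transpose_mul_self_mulVec_inv_mulVec hA, one_mul, dotProduct_comm] at key

theorem le_dotProduct_inv_transpose_mul_self {A : Matrix n n ℝ} (hA : IsUnit A) {c : ℝ}
    (h : ∀ x, (A *ᵥ x) ⬝ᵥ (A *ᵥ x) ≤ c * (x ⬝ᵥ x)) (z : n → ℝ) :
    z ⬝ᵥ z ≤ c * (z ⬝ᵥ ((Aᵀ * A)⁻¹ *ᵥ z)) := by
  have key := (posSemidef_transpose_mul_self A).mulVec_dotProduct_mulVec_le
    (fun x => by rw [dotProduct_transpose_mul_self_mulVec]; exact h x) ((Aᵀ * A)⁻¹ *ᵥ z)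
  rwa [transpose_mul_self_mulVec_inv_mulVec hA, dotProduct_comm ((Aᵀ * A)⁻¹ *ᵥ z)] at key

end Inverse

section Integral

variable {f : ℝ → Matrix n n ℝ} {a b : ℝ}

theorem intervalIntegral_dotProduct_mulVec (hf : ContinuousOn f (Set.uIcc a b)) (z w : n → ℝ) :
    z ⬝ᵥ ((∫ u in a..b, f u) *ᵥ w) = ∫ u in a..b, z ⬝ᵥ (f u *ᵥ w) := by
  let L : Matrix n n ℝ →ₗ[ℝ] ℝ :=
    { toFun := fun A => z ⬝ᵥ (A *ᵥ w)
      map_add' := fun A B => by simp only [add_mulVec, dotProduct_add]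
      map_smul' := fun c A => by simp only [smul_mulVec, dotProduct_smul, RingHom.id_apply] }
  exact (L.toContinuousLinearMap.intervalIntegral_comp_comm hf.intervalIntegrable).symm

theorem continuousOn_dotProduct_mulVec {s : Set ℝ} (hf : ContinuousOn f s) (z w : n → ℝ) :
    ContinuousOn (fun u => z ⬝ᵥ (f u *ᵥ w)) s :=
  ((continuous_const.dotProduct (continuous_id.matrix_mulVec continuous_const)).comp_continuousOn
    hf :)

theorem PosSemidef.intervalIntegral (hab : a ≤ b) (hf : ContinuousOn f (Set.uIcc a b))
    (hpsd : ∀ u ∈ Set.uIcc a b, (f u).PosSemidef) : (∫ u in a..b, f u).PosSemidef := by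
  refine .of_dotProduct_mulVec_nonneg ?_ fun z => ?_
  · have hcomm : ∫ u in a..b, (f u)ᴴ = (∫ u in a..b, f u)ᴴ :=
      (conjTransposeLinearEquiv n n ℝ ℝ).toLinearMap.toContinuousLinearMap
        |>.intervalIntegral_comp_comm hf.intervalIntegrable
    rw [IsHermitian, ← hcomm]
    exact intervalIntegral.integral_congr fun u hu => (hpsd u hu).1
  · rw [star_trivial, intervalIntegral_dotProduct_mulVec hf]
    exact intervalIntegral.integral_nonneg hab fun u hu => by
      simpa using (hpsd u (Set.Icc_subset_uIcc hu)).dotProduct_mulVec_nonneg z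

theorem intervalIntegral_dotProduct_mulVec_le (hab : a ≤ b) (hf : ContinuousOn f (Set.uIcc a b))
    {c : ℝ} {z : n → ℝ} (h : ∀ u ∈ Set.uIcc a b, z ⬝ᵥ (f u *ᵥ z) ≤ c * (z ⬝ᵥ z)) :
    z ⬝ᵥ ((∫ u in a..b, f u) *ᵥ z) ≤ (b - a) * c * (z ⬝ᵥ z) := by
  rw [intervalIntegral_dotProduct_mulVec hf, mul_assoc, ← smul_eq_mul,
    ← intervalIntegral.integral_const]
  exact intervalIntegral.integral_mono_on hab
    (continuousOn_dotProduct_mulVec hf z z).intervalIntegrable intervalIntegrable_const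
    fun u hu => h u (Set.Icc_subset_uIcc hu)

theorem le_intervalIntegral_dotProduct_mulVec (hab : a ≤ b) (hf : ContinuousOn f (Set.uIcc a b))
    {c : ℝ} {z : n → ℝ} (h : ∀ u ∈ Set.uIcc a b, z ⬝ᵥ z ≤ c * (z ⬝ᵥ (f u *ᵥ z))) :
    (b - a) * (z ⬝ᵥ z) ≤ c * (z ⬝ᵥ ((∫ u in a..b, f u) *ᵥ z)) := by
  rw [intervalIntegral_dotProduct_mulVec hf, ← intervalIntegral.integral_const_mul, ← smul_eq_mul,
    ← intervalIntegral.integral_const]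
  exact intervalIntegral.integral_mono_on hab intervalIntegrable_const
    ((continuousOn_dotProduct_mulVec hf z z).const_smul c).intervalIntegrable
    fun u hu => h u (Set.Icc_subset_uIcc hu)

end Integral

section IntegralInverseGram

variable [DecidableEq n] {Y : ℝ → Matrix n n ℝ} {t : ℝ}

theorem posSemidef_integral_inv_transpose_mul_self (hY : Continuous Y) (ht : 0 ≤ t)
    (hunit : ∀ u ∈ Set.uIcc 0 t, IsUnit (Y u)) :
    (∫ u in (0 : ℝ)..t, ((Y u)ᵀ * Y u)⁻¹).PosSemidef :=
  PosSemidef.intervalIntegral ht (continuousOn_inv_transpose_mul_self hY hunit) fun u _ =>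
    (posSemidef_transpose_mul_self (Y u)).inv

theorem dotProduct_integral_inv_transpose_mul_self_le (hY : Continuous Y) (ht : 0 ≤ t)
    (hunit : ∀ u ∈ Set.uIcc 0 t, IsUnit (Y u)) {c : ℝ} (hc : 0 ≤ c)
    (h : ∀ u ∈ Set.uIcc 0 t, ∀ x, x ⬝ᵥ x ≤ c * ((Y u *ᵥ x) ⬝ᵥ (Y u *ᵥ x))) (z : n → ℝ) :
    z ⬝ᵥ ((∫ u in (0 : ℝ)..t, ((Y u)ᵀ * Y u)⁻¹) *ᵥ z) ≤ t * c * (z ⬝ᵥ z) := by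
  simpa using intervalIntegral_dotProduct_mulVec_le ht
    (continuousOn_inv_transpose_mul_self hY hunit) fun u hu =>
      dotProduct_inv_transpose_mul_self_le (hunit u hu) hc (h u hu) z

theorem le_dotProduct_integral_inv_transpose_mul_self (hY : Continuous Y) (ht : 0 ≤ t)
    (hunit : ∀ u ∈ Set.uIcc 0 t, IsUnit (Y u)) {c : ℝ}
    (h : ∀ u ∈ Set.uIcc 0 t, ∀ x, (Y u *ᵥ x) ⬝ᵥ (Y u *ᵥ x) ≤ c * (x ⬝ᵥ x)) (z : n → ℝ) :
    t * (z ⬝ᵥ z) ≤ c * (z ⬝ᵥ ((∫ u in (0 : ℝ)..t, ((Y u)ᵀ * Y u)⁻¹) *ᵥ z)) := by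
  simpa using le_intervalIntegral_dotProduct_mulVec ht
    (continuousOn_inv_transpose_mul_self hY hunit) fun u hu =>
      le_dotProduct_inv_transpose_mul_self (hunit u hu) (h u hu) z

end IntegralInverseGram

end Matrix

theorem dotProduct_self_le_of_euclNorm_le {n : ℕ} {x y : Fin n → ℝ} {c : ℝ}
    (h : euclNorm x ≤ c * euclNorm y) : x ⬝ᵥ x ≤ c ^ 2 * (y ⬝ᵥ y) := by
  unfold euclNorm at h
  have h2 := mul_self_le_mul_self (Real.sqrt_nonneg _) h
  rwa [mul_mul_mul_comm, Real.mul_self_sqrt (dotProduct_self_nonneg x),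
    Real.mul_self_sqrt (dotProduct_self_nonneg y), ← sq] at h2

section Jacobi

variable {n : ℕ}

noncomputable def wronskian (Y Z : ℝ → Matrix (Fin n) (Fin n) ℝ) (u : ℝ) :
    Matrix (Fin n) (Fin n) ℝ :=
  (Y u)ᵀ * deriv Z u - (deriv Y u)ᵀ * Z u

namespace IsJacobi

variable {R Y Z : ℝ → Matrix (Fin n) (Fin n) ℝ}

theorem hasDerivAt (hY : IsJacobi R Y) (u : ℝ) : HasDerivAt Y (deriv Y u) u :=
  (hY.1.differentiable (by norm_num) u).hasDerivAt

theorem hasDerivAt_deriv (hY : IsJacobi R Y) (u : ℝ) :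
    HasDerivAt (deriv Y) (-(R u * Y u)) u := by
  have hdiff : Differentiable ℝ (deriv Y) :=
    (contDiff_succ_iff_deriv.mp (show ContDiff ℝ (1 + 1) Y from hY.1)).2.2.differentiable
      one_ne_zero
  rw [← eq_neg_of_add_eq_zero_left (hY.2 u)]
  exact (hdiff u).hasDerivAt

theorem wronskian_eq (hRsym : ∀ u, (R u)ᵀ = R u) (hY : IsJacobi R Y) (hZ : IsJacobi R Z)
    (u : ℝ) : wronskian Y Z u = wronskian Y Z 0 := by
  have hW (s : ℝ) : HasDerivAt (wronskian Y Z) 0 s := by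
    refine (((hY.hasDerivAt s).matrix_transpose.matrix_mul (hZ.hasDerivAt_deriv s)).sub
      ((hY.hasDerivAt_deriv s).matrix_transpose.matrix_mul (hZ.hasDerivAt s))).congr_deriv ?_
    rw [transpose_neg, transpose_mul, hRsym, Matrix.mul_neg, Matrix.neg_mul, Matrix.mul_assoc]
    abel
  exact is_const_of_deriv_eq_zero (fun s => (hW s).differentiableAt) (fun s => (hW s).deriv) u 0

end IsJacobi

theorem IsLagrangian.hasDerivAt_inv_mul {Y Z : ℝ → Matrix (Fin n) (Fin n) ℝ}
    (hYL : IsLagrangian Y) {u : ℝ} (hY : DifferentiableAt ℝ Y u) (hZ : DifferentiableAt ℝ Z u)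
    (hdet : (Y u).det ≠ 0) :
    HasDerivAt (fun s => (Y s)⁻¹ * Z s) (((Y u)ᵀ * Y u)⁻¹ * wronskian Y Z u) u := by
  refine ((hY.hasDerivAt.matrix_inv hdet).matrix_mul hZ.hasDerivAt).congr_deriv ?_
  have hdetT : IsUnit (Y u)ᵀ.det := by rw [det_transpose]; exact hdet.isUnit
  have hswap : ((Y u)ᵀ)⁻¹ * (deriv Y u)ᵀ = deriv Y u * (Y u)⁻¹ := calc
    _ = ((Y u)ᵀ)⁻¹ * ((deriv Y u)ᵀ * Y u) * (Y u)⁻¹ := by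
      rw [Matrix.mul_assoc, mul_nonsing_inv_cancel_right _ _ hdet.isUnit]
    _ = _ := by rw [hYL u, nonsing_inv_mul_cancel_left _ _ hdetT]
  rw [wronskian, Matrix.mul_inv_rev]
  simp only [Matrix.mul_sub, Matrix.mul_assoc, Matrix.neg_mul,
    nonsing_inv_mul_cancel_left _ _ hdetT]
  rw [← Matrix.mul_assoc ((Y u)ᵀ)⁻¹, hswap, Matrix.mul_assoc]
  exact neg_add_eq_sub _ _

theorem IsJacobi.integral_inv_transpose_mul_self_mul_sub_deriv
    {R Y Z : ℝ → Matrix (Fin n) (Fin n) ℝ} (hRsym : ∀ u, (R u)ᵀ = R u) (hY : IsJacobi R Y)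
    (hYL : IsLagrangian Y) (hY0 : Y 0 = 1) (hZ : IsJacobi R Z) (hZ0 : Z 0 = 1) {t : ℝ}
    (hZt : Z t = 0) (hunit : ∀ u ∈ Set.uIcc 0 t, IsUnit (Y u)) :
    (∫ u in (0 : ℝ)..t, ((Y u)ᵀ * Y u)⁻¹) * (deriv Y 0 - deriv Z 0) = 1 := by
  have hsymm : (deriv Y 0)ᵀ = deriv Y 0 := by simpa [hY0] using hYL 0
  have hW (u : ℝ) : wronskian Y Z u = deriv Z 0 - deriv Y 0 := by
    rw [hY.wronskian_eq hRsym hZ u, wronskian, hY0, hZ0, hsymm, transpose_one, Matrix.one_mul,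
      Matrix.mul_one]
  have hG := continuousOn_inv_transpose_mul_self hY.1.continuous hunit
  have hFTC := intervalIntegral.integral_eq_sub_of_hasDerivAt
    (fun u hu => hW u ▸ hYL.hasDerivAt_inv_mul (hY.hasDerivAt u).differentiableAt
      (hZ.hasDerivAt u).differentiableAt ((isUnit_iff_isUnit_det _).1 (hunit u hu)).ne_zero)
    (hG.mul continuousOn_const).intervalIntegrable
  rw [hZt, hZ0, hY0, Matrix.mul_zero, inv_one, Matrix.mul_one, zero_sub] at hFTC
  have hpull : (∫ u in (0 : ℝ)..t, ((Y u)ᵀ * Y u)⁻¹) * (deriv Z 0 - deriv Y 0) =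
      ∫ u in (0 : ℝ)..t, ((Y u)ᵀ * Y u)⁻¹ * (deriv Z 0 - deriv Y 0) :=
    ((LinearMap.mulRight ℝ (deriv Z 0 - deriv Y 0)).toContinuousLinearMap.intervalIntegral_comp_comm
      hG.intervalIntegrable).symm
  rw [← neg_sub, Matrix.mul_neg, hpull, neg_eq_iff_eq_neg]
  exact hFTC

end Jacobi

theorem rank_kernel_two_sided_bound_general {n : ℕ}
    (R : ℝ → Matrix (Fin n) (Fin n) ℝ)
    (hRsym : ∀ t : ℝ, (R t)ᵀ = R t)
    (α : ℝ) (hα : 1 ≤ α)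
    (U S : ℝ → Matrix (Fin n) (Fin n) ℝ)
    (hU : IsJacobi R U) (hUL : IsLagrangian U) (hU0 : U 0 = 1)
    (hS : IsJacobi R S) (hSL : IsLagrangian S) (hS0 : S 0 = 1)
    (hUinv : ∀ u : ℝ, 0 ≤ u → IsUnit (U u))
    (hSinv : ∀ u : ℝ, 0 ≤ u → IsUnit (S u))
    (hSup : ∀ u : ℝ, 0 ≤ u → ∀ x : Fin n → ℝ, euclNorm (S u *ᵥ x) ≤ α * euclNorm x)
    (hUlow : ∀ u : ℝ, 0 ≤ u → ∀ x : Fin n → ℝ, euclNorm x / α ≤ euclNorm (U u *ᵥ x))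
    (t : ℝ) (ht : 0 < t)
    (St : ℝ → Matrix (Fin n) (Fin n) ℝ)
    (hSt : IsJacobi R St) (hSt0 : St 0 = 1) (hStt : St t = 0) :
    ∀ x : Fin n → ℝ, (deriv U 0 - deriv S 0) *ᵥ x = 0 →
      (1 / (α ^ 2 * t)) * (x ⬝ᵥ x) ≤ ((deriv U 0 - deriv St 0) *ᵥ x) ⬝ᵥ x ∧
      ((deriv U 0 - deriv St 0) *ᵥ x) ⬝ᵥ x ≤ (α ^ 2 / t) * (x ⬝ᵥ x) := by
  intro x hker
  have hα0 : 0 < α := by linarith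
  have hpos : ∀ u ∈ Set.uIcc 0 t, 0 ≤ u := fun u hu => (Set.uIcc_of_le ht.le ▸ hu).1
  have hUunit u (hu : u ∈ Set.uIcc 0 t) := hUinv u (hpos u hu)
  have hSunit u (hu : u ∈ Set.uIcc 0 t) := hSinv u (hpos u hu)
  set y := (deriv U 0 - deriv St 0) *ᵥ x with hy
  have hUy : (∫ u in (0 : ℝ)..t, ((U u)ᵀ * U u)⁻¹) *ᵥ y = x := by
    rw [mulVec_mulVec, hU.integral_inv_transpose_mul_self_mul_sub_deriv hRsym hUL hU0 hSt hSt0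
      hStt hUunit, one_mulVec]
  have hSy : (∫ u in (0 : ℝ)..t, ((S u)ᵀ * S u)⁻¹) *ᵥ y = x := by
    rw [hy, ← sub_add_sub_cancel _ (deriv S 0), add_mulVec, hker, zero_add, mulVec_mulVec,
      hS.integral_inv_transpose_mul_self_mul_sub_deriv hRsym hSL hS0 hSt hSt0 hStt hSunit,
      one_mulVec]
  have hlow := (posSemidef_integral_inv_transpose_mul_self hU.1.continuous ht.le hUunit)
    |>.mulVec_dotProduct_mulVec_le (dotProduct_integral_inv_transpose_mul_self_le
      hU.1.continuous ht.le hUunit (sq_nonneg α) fun u hu w =>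
        dotProduct_self_le_of_euclNorm_le ((div_le_iff₀' hα0).1 (hUlow u (hpos u hu) w))) y
  have hup := dotProduct_mulVec_le_of_forall_le (sq_nonneg α) ht.le
    (le_dotProduct_integral_inv_transpose_mul_self hS.1.continuous ht.le hSunit fun u hu w =>
      dotProduct_self_le_of_euclNorm_le (hSup u (hpos u hu) w)) y
  rw [hUy] at hlow
  rw [hSy] at hup
  constructor
  · rw [one_div, inv_mul_le_iff₀ (by positivity)]
    linarith
  · rw [div_mul_eq_mul_div, le_div_iff₀ ht]
    linarith

/-- For an `α`-stable pair of stable/unstable Lagrangian Jacobi solutions `S`, `U`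
and `x ∈ ker(U'(0) − S'(0))`, one has
`⟨x,x⟩/(α² t) ≤ ⟨(U'(0) − S_t'(0))x, x⟩ ≤ (α²/t)⟨x,x⟩`. -/
theorem rank_kernel_two_sided_bound {n : ℕ} (hn : 1 ≤ n)
    (R : ℝ → Matrix (Fin n) (Fin n) ℝ) (hRc : Continuous R)
    (hRsym : ∀ t : ℝ, (R t)ᵀ = R t)
    (α : ℝ) (hα : 1 ≤ α)
    (U S : ℝ → Matrix (Fin n) (Fin n) ℝ)
    (hU : IsJacobi R U) (hUL : IsLagrangian U) (hU0 : U 0 = 1)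
    (hS : IsJacobi R S) (hSL : IsLagrangian S) (hS0 : S 0 = 1)
    (hUinv : ∀ u : ℝ, 0 ≤ u → IsUnit (U u))
    (hSinv : ∀ u : ℝ, 0 ≤ u → IsUnit (S u))
    (hSup : ∀ u : ℝ, 0 ≤ u → ∀ x : Fin n → ℝ, euclNorm (S u *ᵥ x) ≤ α * euclNorm x)
    (hUlow : ∀ u : ℝ, 0 ≤ u → ∀ x : Fin n → ℝ, euclNorm x / α ≤ euclNorm (U u *ᵥ x))
    (t : ℝ) (ht : 0 < t)
    (St : ℝ → Matrix (Fin n) (Fin n) ℝ)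
    (hSt : IsJacobi R St) (hSt0 : St 0 = 1) (hStt : St t = 0) :
    ∀ x : Fin n → ℝ, (deriv U 0 - deriv S 0) *ᵥ x = 0 →
      (1 / (α ^ 2 * t)) * (x ⬝ᵥ x) ≤ ((deriv U 0 - deriv St 0) *ᵥ x) ⬝ᵥ x ∧
      ((deriv U 0 - deriv St 0) *ᵥ x) ⬝ᵥ x ≤ (α ^ 2 / t) * (x ⬝ᵥ x) :=
  rank_kernel_two_sided_bound_general R hRsym α hα U S hU hUL hU0 hS hSL hS0 hUinv hSinv hSup hUlow
    t ht St hSt hSt0 hStt
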